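/- For every positive integer $k$, $\sum_{n=1}^{\infty} (-1)^{n-1}\frac{L_n(1)}{n+k} = (-1)^{k-1}\left( \frac{\zeta(2) - \ln^2 2}{2} - \sum_{i=1}^{k-1} (-1)^{i-1}\frac{H_i}{i} \right)$. -/

import Mathlib

open Filter

noncomputable def H (n : ℕ) : ℝ := ∑ j ∈ Finset.Icc 1 n, (1 : ℝ) / j

noncomputable def La (m n : ℕ) : ℝ := ∑ j ∈ Finset.Icc 1 n, (-1 : ℝ) ^ (j - 1) / (j : ℝ) ^ m

/-!
Write `S_k(N) = ∑_{n<N} (-1)^n L_{n+1}(1) / (n+1+k)`. Since `(-1)^n/(n+1+k) + (-1)^n/(n+2+k)` is a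
difference of consecutive terms, Abel summation gives
`S_k(N) + S_{k+1}(N) = ∑_{n<N} 1/((n+1)(n+1+k)) ± L_N(1)/(N+1+k)`,
whose right side tends to `H_k / k` for `k ≥ 1` and to `ζ(2)` for `k = 0`. For `k = 0` the same
computation gives `2 S_0(N) = L_N(1)^2 + ∑_{n<N} 1/(n+1)^2`, so `S_0 → (log² 2 + ζ(2))/2`, and
`L_N(1) → log 2` follows from `L_{2N}(1) = H_{2N} - H_N` and `H_n - log n → γ`. The closed form
satisfies the same recursion, starting from `S_1 → ζ(2) - lim S_0`.
-/

open Finset Real Topology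

lemma H_eq_sum_range (n : ℕ) : H n = ∑ i ∈ range n, 1 / ((i : ℝ) + 1) := by
  rw [H, ← Ico_add_one_right_eq_Icc, sum_Ico_eq_sum_range]
  simp [add_comm]

lemma La_one_eq_sum_range (n : ℕ) : La 1 n = ∑ i ∈ range n, (-1 : ℝ) ^ i / ((i : ℝ) + 1) := by
  rw [La, ← Ico_add_one_right_eq_Icc, sum_Ico_eq_sum_range]
  simp [add_comm]

@[simp] lemma La_one_zero : La 1 0 = 0 := by simp [La_one_eq_sum_range]

lemma La_one_succ (n : ℕ) : La 1 (n + 1) = La 1 n + (-1 : ℝ) ^ n / ((n : ℝ) + 1) := by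
  simp only [La_one_eq_sum_range, sum_range_succ]

lemma La_one_two_mul (n : ℕ) : La 1 (2 * n) = harmonic (2 * n) - harmonic n := by
  induction n with
  | zero => simp
  | succ n ih =>
    rw [show 2 * (n + 1) = 2 * n + 1 + 1 by ring, La_one_succ, La_one_succ, ih,
      harmonic_succ, harmonic_succ, harmonic_succ, pow_succ, (even_two_mul n).neg_one_pow]
    push_cast
    field_simp
    ring

lemma tendsto_of_tendsto_even_of_tendsto_odd {α : Type*} {f : ℕ → α} {l : Filter α}
    (he : Tendsto (fun n => f (2 * n)) atTop l) (ho : Tendsto (fun n => f (2 * n + 1)) atTop l) :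
    Tendsto f atTop l := by
  intro s hs
  obtain ⟨a, ha⟩ := eventually_atTop.1 (he hs)
  obtain ⟨b, hb⟩ := eventually_atTop.1 (ho hs)
  refine eventually_atTop.2 ⟨2 * (a + b), fun n hn => ?_⟩
  obtain ⟨m, rfl | rfl⟩ := Nat.even_or_odd' n
  · exact ha m (by omega)
  · exact hb m (by omega)

lemma tendsto_La_one : Tendsto (La 1) atTop (𝓝 (log 2)) := by
  have htwo : Tendsto (fun n : ℕ => 2 * n) atTop atTop :=
    tendsto_id.const_mul_atTop' two_pos
  have heven : Tendsto (fun n => La 1 (2 * n)) atTop (𝓝 (log 2)) := by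
    -- `H (2n) - H n = (H (2n) - log (2n)) - (H n - log n) + log 2` and both brackets tend to `γ`
    have h := ((tendsto_harmonic_sub_log.comp htwo).sub tendsto_harmonic_sub_log).add_const (log 2)
    rw [sub_self, zero_add] at h
    refine h.congr' ?_
    filter_upwards [eventually_ne_atTop 0] with n hn
    simp only [Function.comp_apply, La_one_two_mul, Nat.cast_mul, Nat.cast_ofNat,
      log_mul two_ne_zero (Nat.cast_ne_zero.2 hn)]
    ring
  refine tendsto_of_tendsto_even_of_tendsto_odd heven ?_
  have h := heven.add (tendsto_one_div_add_atTop_nhds_zero_nat.comp htwo)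
  rw [add_zero] at h
  refine h.congr fun n => ?_
  simp [La_one_succ, (even_two_mul n).neg_one_pow]

noncomputable def altLaSum (k N : ℕ) : ℝ :=
  ∑ n ∈ range N, (-1 : ℝ) ^ n * La 1 (n + 1) / ((n : ℝ) + 1 + k)

noncomputable def invMulSum (k N : ℕ) : ℝ :=
  ∑ n ∈ range N, 1 / (((n : ℝ) + 1) * ((n : ℝ) + 1 + k))

lemma altLaSum_succ (k N : ℕ) :
    altLaSum k (N + 1) = altLaSum k N + (-1 : ℝ) ^ N * La 1 (N + 1) / ((N : ℝ) + 1 + k) :=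
  sum_range_succ _ _

lemma invMulSum_succ (k N : ℕ) :
    invMulSum k (N + 1) = invMulSum k N + 1 / (((N : ℝ) + 1) * ((N : ℝ) + 1 + k)) :=
  sum_range_succ _ _

lemma neg_one_pow_mul_self {R : Type*} [Monoid R] [HasDistribNeg R] (n : ℕ) :
    (-1 : R) ^ n * (-1) ^ n = 1 := by
  rw [← pow_add]
  exact Even.neg_one_pow ⟨n, rfl⟩

lemma two_mul_altLaSum_zero (N : ℕ) : 2 * altLaSum 0 N = La 1 N ^ 2 + invMulSum 0 N := by
  induction N with
  | zero => simp [altLaSum, invMulSum]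
  | succ N ih =>
    rw [altLaSum_succ, invMulSum_succ, La_one_succ, Nat.cast_zero, add_zero]
    have hN : (N : ℝ) + 1 ≠ 0 := by positivity
    field_simp
    linear_combination ((N : ℝ) + 1) ^ 2 * ih + neg_one_pow_mul_self (R := ℝ) N

lemma altLaSum_add_altLaSum_succ (k N : ℕ) :
    altLaSum k N + altLaSum (k + 1) N =
      invMulSum k N + (-1 : ℝ) ^ (N + 1) * La 1 N / ((N : ℝ) + 1 + k) := by
  induction N with
  | zero => simp [altLaSum, invMulSum]
  | succ N ih =>
    rw [altLaSum_succ, altLaSum_succ, invMulSum_succ, La_one_succ, eq_sub_of_add_eq' ih]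
    have hN : (N : ℝ) + 1 ≠ 0 := by positivity
    have hNk : (N : ℝ) + 1 + k ≠ 0 := by positivity
    have hNk' : (N : ℝ) + 1 + 1 + k ≠ 0 := by positivity
    push_cast
    rcases neg_one_pow_eq_or ℝ N with h | h <;>
    · simp only [pow_succ, h]
      field_simp
      ring

lemma tendsto_neg_one_pow_mul_La_one_div (k : ℕ) :
    Tendsto (fun N : ℕ => (-1 : ℝ) ^ (N + 1) * La 1 N / ((N : ℝ) + 1 + k)) atTop (𝓝 0) := by
  have hden : Tendsto (fun N : ℕ => (N : ℝ) + 1 + k) atTop atTop :=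
    tendsto_atTop_add_const_right _ _ (tendsto_atTop_add_const_right _ _ tendsto_natCast_atTop_atTop)
  have h := tendsto_La_one.div_atTop hden
  rw [tendsto_zero_iff_norm_tendsto_zero] at h ⊢
  simpa [mul_div_assoc] using h

lemma tendsto_altLaSum_succ {k : ℕ} {a g : ℝ} (hS : Tendsto (altLaSum k) atTop (𝓝 a))
    (hG : Tendsto (invMulSum k) atTop (𝓝 g)) :
    Tendsto (altLaSum (k + 1)) atTop (𝓝 (g - a)) := by
  have h := (hG.add (tendsto_neg_one_pow_mul_La_one_div k)).sub hS
  rw [add_zero] at h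
  refine h.congr fun N => ?_
  rw [← altLaSum_add_altLaSum_succ]
  ring

lemma tendsto_invMulSum_zero : Tendsto (invMulSum 0) atTop (𝓝 (π ^ 2 / 6)) := by
  have h := ((hasSum_nat_add_iff' 1).2 hasSum_zeta_two).tendsto_sum_nat
  simp only [sum_range_one, Nat.cast_zero, zero_pow two_ne_zero, div_zero, sub_zero] at h
  refine h.congr fun N => ?_
  simp [invMulSum, sq]

lemma tendsto_altLaSum_zero :
    Tendsto (altLaSum 0) atTop (𝓝 ((log 2 ^ 2 + π ^ 2 / 6) / 2)) := by
  refine (((tendsto_La_one.pow 2).add tendsto_invMulSum_zero).div_const 2).congr fun N => ?_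
  rw [← two_mul_altLaSum_zero]
  ring

lemma natCast_mul_invMulSum (k N : ℕ) :
    k * invMulSum k N = H k - ∑ j ∈ range k, 1 / ((N : ℝ) + j + 1) := by
  have hkN := sum_range_add (fun i : ℕ => 1 / ((i : ℝ) + 1)) k N
  have hNk := sum_range_add (fun i : ℕ => 1 / ((i : ℝ) + 1)) N k
  simp only [Nat.cast_add, ← H_eq_sum_range] at hkN hNk
  have hfrac : k * invMulSum k N = H N - ∑ n ∈ range N, 1 / ((k : ℝ) + n + 1) := by
    rw [invMulSum, mul_sum, H_eq_sum_range, ← sum_sub_distrib]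
    refine sum_congr rfl fun n _ => ?_
    field_simp
    ring
  rw [add_comm k N] at hkN
  linarith

lemma tendsto_invMulSum {k : ℕ} (hk : 0 < k) : Tendsto (invMulSum k) atTop (𝓝 (H k / k)) := by
  have htail : Tendsto (fun N : ℕ => ∑ j ∈ range k, 1 / ((N : ℝ) + j + 1)) atTop (𝓝 0) := by
    rw [← sum_const_zero (s := range k)]
    refine tendsto_finsetSum _ fun j _ => tendsto_const_nhds.div_atTop ?_
    exact tendsto_atTop_add_const_right _ _
      (tendsto_atTop_add_const_right _ _ tendsto_natCast_atTop_atTop)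
  have h := (tendsto_const_nhds (x := H k)).sub htail |>.div_const (k : ℝ)
  rw [sub_zero] at h
  refine h.congr fun N => ?_
  rw [← natCast_mul_invMulSum]
  field_simp

noncomputable def altLaLimit (k : ℕ) : ℝ :=
  (-1 : ℝ) ^ (k - 1) *
    ((π ^ 2 / 6 - log 2 ^ 2) / 2 - ∑ i ∈ Icc 1 (k - 1), (-1 : ℝ) ^ (i - 1) * H i / i)

lemma altLaLimit_one : altLaLimit 1 = (π ^ 2 / 6 - log 2 ^ 2) / 2 := by
  simp [altLaLimit]

lemma altLaLimit_succ {k : ℕ} (hk : 0 < k) : altLaLimit (k + 1) = H k / k - altLaLimit k := by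
  obtain ⟨j, rfl⟩ := Nat.exists_eq_add_of_lt hk
  simp only [altLaLimit, zero_add, Nat.add_sub_cancel, sum_Icc_succ_top (Nat.le_add_left 1 j),
    pow_succ]
  push_cast
  linear_combination H (j + 1) / ((j : ℝ) + 1) * neg_one_pow_mul_self (R := ℝ) j

theorem stmt17 (k : ℕ) (hk : 0 < k) :
    Tendsto (fun N => ∑ n ∈ Finset.range N, (-1 : ℝ) ^ n * La 1 (n + 1) / ((n : ℝ) + 1 + k))
      atTop
      (nhds ((-1 : ℝ) ^ (k - 1) *
        ((Real.pi ^ 2 / 6 - (Real.log 2) ^ 2) / 2 -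
          ∑ i ∈ Finset.Icc 1 (k - 1), (-1 : ℝ) ^ (i - 1) * H i / i))) := by
  change Tendsto (altLaSum k) atTop (𝓝 (altLaLimit k))
  induction k, hk using Nat.le_induction with
  | base =>
    rw [altLaLimit_one]
    convert tendsto_altLaSum_succ tendsto_altLaSum_zero tendsto_invMulSum_zero using 2
    ring
  | succ k hk ih =>
    rw [altLaLimit_succ hk]
    exact tendsto_altLaSum_succ ih (tendsto_invMulSum hk)
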